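/- If r > d, then for all i,j ∈ ℕ the extinction probability satisfies the lower bound (d/r)^{i+j} ≤ p_{i,j}. -/

import Mathlib

/-- `hitProbAux r d T (i, j) = ℙ_{i,j}[τ₀ ≤ T]`: the probability, for the discrete-time
Markov chain on `ℕ × ℕ` (jumping from a non-absorbed state `(i,j)` to `(i+1,j)` and `(i,j+1)`
with probability `r/(2(r+d))` each, and to `(i-1,j)`, `(i,j-1)` with probabilities
`d·i/((r+d)(i+j))` and `d·j/((r+d)(i+j))`, states with a zero coordinate being absorbing),
started at `(i,j)`, that one of the axes is reached within `T` steps. -/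
noncomputable def hitProbAux (r d : ℝ) : ℕ → ℕ × ℕ → ℝ
  | 0, p => if p.1 = 0 ∨ p.2 = 0 then 1 else 0
  | T + 1, p =>
      if p.1 = 0 ∨ p.2 = 0 then 1
      else
        r / (2 * (r + d)) * hitProbAux r d T (p.1 + 1, p.2)
          + r / (2 * (r + d)) * hitProbAux r d T (p.1, p.2 + 1)
          + d * p.1 / ((r + d) * ((p.1 : ℝ) + (p.2 : ℝ))) * hitProbAux r d T (p.1 - 1, p.2)
          + d * p.2 / ((r + d) * ((p.1 : ℝ) + (p.2 : ℝ))) * hitProbAux r d T (p.1, p.2 - 1)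

/-- `extinctionProb r d i j = p_{i,j} = ℙ_{i,j}[τ₀ < ∞]`, where
`τ₀ = inf {t : X_t = 0 or Y_t = 0}`: it is the supremum (monotone limit) over the time
horizon `T` of `ℙ_{i,j}[τ₀ ≤ T] = hitProbAux r d T (i, j)`. -/
noncomputable def extinctionProb (r d : ℝ) (i j : ℕ) : ℝ :=
  ⨆ T : ℕ, hitProbAux r d T (i, j)

/-!
With `q = d/r`, the function `q^(X+Y)` is harmonic for the chain off the axes (it solves
`r q² + d = (r + d) q`) and is at most `1` on the axes. To compare it with the hitting
probability at a finite horizon `T`, subtract `ρ^T l^(X+Y)` for some `l ∈ (q, 1)`: the chain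
multiplies `l^(X+Y)` by `ρ = (r l² + d)/((r + d) l) < 1`, so `q^(X+Y) - ρ^T l^(X+Y)` is a subsolution of the recursion
for `ℙ[τ₀ ≤ T]`, and the correction vanishes as `T → ∞`.
-/

/-- The expected value of `f` after one step of the chain from a state off the axes. -/
noncomputable def stepMean (r d : ℝ) (f : ℕ × ℕ → ℝ) (p : ℕ × ℕ) : ℝ :=
  r / (2 * (r + d)) * f (p.1 + 1, p.2) + r / (2 * (r + d)) * f (p.1, p.2 + 1)
    + d * p.1 / ((r + d) * ((p.1 : ℝ) + (p.2 : ℝ))) * f (p.1 - 1, p.2)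
    + d * p.2 / ((r + d) * ((p.1 : ℝ) + (p.2 : ℝ))) * f (p.1, p.2 - 1)

section

variable {r d : ℝ}

theorem hitProbAux_zero (p : ℕ × ℕ) :
    hitProbAux r d 0 p = if p.1 = 0 ∨ p.2 = 0 then 1 else 0 :=
  rfl

theorem hitProbAux_succ (T : ℕ) (p : ℕ × ℕ) :
    hitProbAux r d (T + 1) p =
      if p.1 = 0 ∨ p.2 = 0 then 1 else stepMean r d (hitProbAux r d T) p :=
  rfl

theorem stepMean_mono (hr : 0 ≤ r) (hd : 0 ≤ d) {f g : ℕ × ℕ → ℝ} (hfg : f ≤ g)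
    (p : ℕ × ℕ) : stepMean r d f p ≤ stepMean r d g p := by
  unfold stepMean
  gcongr <;> apply hfg

theorem stepMean_sub_mul (f g : ℕ × ℕ → ℝ) (c : ℝ) (p : ℕ × ℕ) :
    stepMean r d (fun x => f x - c * g x) p = stepMean r d f p - c * stepMean r d g p := by
  unfold stepMean
  ring

theorem stepMean_comp_add (hrd : r + d ≠ 0) (φ : ℕ → ℝ) {p : ℕ × ℕ} (h₁ : p.1 ≠ 0)
    (h₂ : p.2 ≠ 0) :
    stepMean r d (fun x => φ (x.1 + x.2)) p
      = r / (r + d) * φ (p.1 + p.2 + 1) + d / (r + d) * φ (p.1 + p.2 - 1) := by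
  obtain ⟨i, j⟩ := p
  dsimp only at h₁ h₂ ⊢
  have hi : (0 : ℝ) < i := by exact_mod_cast Nat.pos_of_ne_zero h₁
  have hsum : (i : ℝ) + j ≠ 0 := by positivity
  have e₁ : i + 1 + j = i + j + 1 := by omega
  have e₂ : i - 1 + j = i + j - 1 := by omega
  have e₃ : i + (j - 1) = i + j - 1 := by omega
  simp only [stepMean, e₁, e₂, e₃, ← add_assoc]
  field_simp
  ring

theorem stepMean_const (hrd : r + d ≠ 0) {p : ℕ × ℕ} (h₁ : p.1 ≠ 0) (h₂ : p.2 ≠ 0) :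
    stepMean r d (fun _ => 1) p = 1 := by
  rw [stepMean_comp_add (φ := fun _ => 1) hrd h₁ h₂]
  field_simp

theorem stepMean_pow (hrd : r + d ≠ 0) {x c : ℝ} (hx : r * x ^ 2 + d = (r + d) * c * x)
    {p : ℕ × ℕ} (h₁ : p.1 ≠ 0) (h₂ : p.2 ≠ 0) :
    stepMean r d (fun y => x ^ (y.1 + y.2)) p = c * x ^ (p.1 + p.2) := by
  rw [stepMean_comp_add (φ := (x ^ ·)) hrd h₁ h₂]
  obtain ⟨n, hn⟩ := Nat.exists_eq_add_one_of_ne_zero (by omega : p.1 + p.2 ≠ 0)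
  rw [hn, Nat.add_sub_cancel]
  field_simp
  linear_combination x ^ n * hx

theorem hitProbAux_le_one (hr : 0 ≤ r) (hd : 0 < d) (T : ℕ) (p : ℕ × ℕ) :
    hitProbAux r d T p ≤ 1 := by
  induction T generalizing p with
  | zero => rw [hitProbAux_zero]; split_ifs <;> norm_num
  | succ T ih =>
    rw [hitProbAux_succ]
    split_ifs with hp
    · rfl
    · push Not at hp
      calc stepMean r d (hitProbAux r d T) p ≤ stepMean r d (fun _ => 1) p :=
            stepMean_mono hr hd.le (fun q => ih q) p
        _ = 1 := stepMean_const (by positivity) hp.1 hp.2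

theorem hitProbAux_le_extinctionProb (hr : 0 ≤ r) (hd : 0 < d) (T i j : ℕ) :
    hitProbAux r d T (i, j) ≤ extinctionProb r d i j :=
  le_ciSup ⟨1, Set.forall_mem_range.2 fun T => hitProbAux_le_one hr hd T (i, j)⟩ T

theorem le_hitProbAux (hr : 0 ≤ r) (hd : 0 ≤ d) (g : ℕ → ℕ × ℕ → ℝ)
    (h_axes : ∀ T p, (p.1 = 0 ∨ p.2 = 0) → g T p ≤ 1)
    (h_zero : ∀ p, p.1 ≠ 0 → p.2 ≠ 0 → g 0 p ≤ 0)
    (h_succ : ∀ T p, p.1 ≠ 0 → p.2 ≠ 0 → g (T + 1) p ≤ stepMean r d (g T) p)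
    (T : ℕ) (p : ℕ × ℕ) : g T p ≤ hitProbAux r d T p := by
  induction T generalizing p with
  | zero =>
    rw [hitProbAux_zero]
    split_ifs with hp
    · exact h_axes 0 p hp
    · push Not at hp
      exact h_zero p hp.1 hp.2
  | succ T ih =>
    rw [hitProbAux_succ]
    split_ifs with hp
    · exact h_axes _ p hp
    · push Not at hp
      exact (h_succ T p hp.1 hp.2).trans (stepMean_mono hr hd (fun q => ih q) p)

theorem pow_sub_le_hitProbAux (hd : 0 < d) (hdr : d ≤ r) {l ρ : ℝ} (hl : d / r ≤ l)
    (hρ : 0 ≤ ρ) (hlρ : r * l ^ 2 + d = (r + d) * ρ * l) (T i j : ℕ) :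
    (d / r) ^ (i + j) - ρ ^ T * l ^ (i + j) ≤ hitProbAux r d T (i, j) := by
  have hr : 0 < r := hd.trans_le hdr
  have hrd : r + d ≠ 0 := by positivity
  have hq₀ : 0 ≤ d / r := by positivity
  have hq₁ : d / r ≤ 1 := (div_le_one hr).2 hdr
  have hq : r * (d / r) ^ 2 + d = (r + d) * 1 * (d / r) := by field_simp; ring
  refine le_hitProbAux hr.le hd.le (fun T p => (d / r) ^ (p.1 + p.2) - ρ ^ T * l ^ (p.1 + p.2))
    ?_ ?_ ?_ T (i, j)
  · intro T p _
    have : 0 ≤ ρ ^ T * l ^ (p.1 + p.2) := by have := hq₀.trans hl; positivity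
    linarith [pow_le_one₀ hq₀ hq₁ (n := p.1 + p.2)]
  · intro p _ _
    simpa using pow_le_pow_left₀ hq₀ hl (p.1 + p.2)
  · intro T p h₁ h₂
    rw [stepMean_sub_mul, stepMean_pow hrd hq h₁ h₂, stepMean_pow hrd hlρ h₁ h₂]
    exact le_of_eq (by ring)

end

/-- Any `l ∈ (d/r, 1)` works, since `r l² - (r + d) l + d = (r l - d)(l - 1)`. -/
theorem exists_pow_eigenvalue_lt_one {r d : ℝ} (hd : 0 < d) (hdr : d < r) :
    ∃ l ρ : ℝ, d / r ≤ l ∧ 0 ≤ ρ ∧ ρ < 1 ∧ r * l ^ 2 + d = (r + d) * ρ * l := by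
  have hr : 0 < r := hd.trans hdr
  have hq : d / r < 1 := (div_lt_one hr).2 hdr
  set l := (d / r + 1) / 2 with hl_def
  have hl : d / r < l := by linarith
  have hl₁ : l < 1 := by linarith
  have hl₀ : 0 < l := by positivity
  have hrl : d < r * l := by rwa [div_lt_iff₀' hr] at hl
  refine ⟨l, (r * l ^ 2 + d) / ((r + d) * l), hl.le, by positivity, ?_, by field_simp⟩
  rw [div_lt_one (by positivity)]
  nlinarith

/-- if `r > d`, the lower bound `(d/r)^(i+j) ≤ p_{i,j}` holds. -/
theorem extinctionProb_lower_bound (r d : ℝ) (hd : 0 < d) (hrd : d < r) :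
    ∀ i j : ℕ, (d / r) ^ (i + j) ≤ extinctionProb r d i j := by
  intro i j
  obtain ⟨l, ρ, hl, hρ₀, hρ₁, hlρ⟩ := exists_pow_eigenvalue_lt_one hd hrd
  have hr : 0 ≤ r := (hd.trans hrd).le
  have hlim : Filter.Tendsto (fun T : ℕ => (d / r) ^ (i + j) - ρ ^ T * l ^ (i + j))
      Filter.atTop (nhds ((d / r) ^ (i + j))) := by
    simpa using ((tendsto_pow_atTop_nhds_zero_of_lt_one hρ₀ hρ₁).mul_const
      (l ^ (i + j))).const_sub ((d / r) ^ (i + j))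
  refine le_of_tendsto' hlim fun T => ?_
  exact (pow_sub_le_hitProbAux hd hrd.le hl hρ₀ hlρ T i j).trans
    (hitProbAux_le_extinctionProb hr hd T i j)
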